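/- Let d ≥ 1, ε ∈ (0,1], and let A : ℝ^d → ℝ^{d×d} be a measurable matrix-valued function such that for almost every x ∈ ℝ^d the matrix A(x) is nonzero and satisfies the Cordes condition with parameter ε; set γ(x) := tr A(x)/‖A(x)‖_F². Then for all smooth (C^∞) compactly supported u, v : ℝ^d → ℝ one has |∫_{ℝ^d} γ(x)·(A(x):∇²u(x))·Δv(x) dx| ≤ (1+√(1−ε))·‖Δu‖_{L²(ℝ^d)}·‖Δv‖_{L²(ℝ^d)}, where ‖w‖_{L²(ℝ^d)} := (∫ w²)^{1/2}. (This is the whole-space form of the boundedness of the bilinear form a(u,v) = ∫ γA:∇²u Δv dx in Lemma 2.2, combining the Cordes estimate with the Cauchy–Schwarz inequality and the Miranda–Talenti identity on ℝ^d.) -/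

import Mathlib

open Matrix MeasureTheory

/-- Frobenius inner product of two `d × d` real matrices. -/
noncomputable def frobInner {d : ℕ} (A B : Matrix (Fin d) (Fin d) ℝ) : ℝ :=
  ∑ i, ∑ j, A i j * B i j

/-- Frobenius norm of a `d × d` real matrix. -/
noncomputable def frobNorm {d : ℕ} (A : Matrix (Fin d) (Fin d) ℝ) : ℝ :=
  Real.sqrt (frobInner A A)

/-- The Cordes condition with parameter `ε`. -/
def CordesCond {d : ℕ} (ε : ℝ) (A : Matrix (Fin d) (Fin d) ℝ) : Prop :=
  ((d : ℝ) - 1 + ε) * frobNorm A ^ 2 ≤ trace A ^ 2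

/-- The Hessian matrix of a function `u : ℝ^d → ℝ` at a point `x`. -/
noncomputable def hessianMatrix {d : ℕ} (u : (Fin d → ℝ) → ℝ) (x : Fin d → ℝ) :
    Matrix (Fin d) (Fin d) ℝ :=
  Matrix.of fun i j =>
    fderiv ℝ (fun y => fderiv ℝ u y (Pi.single i 1)) x (Pi.single j 1)


noncomputable def pd {d : ℕ} (i : Fin d) (u : (Fin d → ℝ) → ℝ) : (Fin d → ℝ) → ℝ :=
  fun x => fderiv ℝ u x (Pi.single i 1)

lemma contDiff_pd {d : ℕ} (i : Fin d) {u : (Fin d → ℝ) → ℝ} (hu : ContDiff ℝ (⊤ : ℕ∞) u) :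
    ContDiff ℝ (⊤ : ℕ∞) (pd i u) :=
  (hu.fderiv_right (by simp)).clm_apply contDiff_const

lemma hcs_pd {d : ℕ} (i : Fin d) {u : (Fin d → ℝ) → ℝ} (hcu : HasCompactSupport u) :
    HasCompactSupport (pd i u) :=
  hcu.fderiv_apply ℝ (Pi.single i 1)

lemma clairaut {d : ℕ} {w : (Fin d → ℝ) → ℝ} (hw : ContDiff ℝ (⊤ : ℕ∞) w) (i j : Fin d)
    (x : Fin d → ℝ) : pd i (pd j w) x = pd j (pd i w) x := by
  have hsymm := (hw.contDiffAt (x := x)).isSymmSndFDerivAt (by rw [minSmoothness_of_isRCLikeNormedField]; exact WithTop.coe_le_coe.mpr (le_top : (2 : ℕ∞) ≤ ⊤))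
  have key : ∀ a b : Fin d, pd a (pd b w) x
      = fderiv ℝ (fderiv ℝ w) x (Pi.single a 1) (Pi.single b 1) := by
    intro a b
    have hdw : DifferentiableAt ℝ (fderiv ℝ w) x :=
      ((hw.fderiv_right (m := 1) (WithTop.coe_le_coe.mpr le_top)).differentiable (by simp)).differentiableAt
    show fderiv ℝ (fun y => (fderiv ℝ w y) (Pi.single b 1)) x (Pi.single a 1) = _
    rw [fderiv_clm_apply hdw (differentiableAt_const _)]
    simp
  rw [key i j, key j i, hsymm]

lemma integrable_mul_cc {d : ℕ} {f g : (Fin d → ℝ) → ℝ}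
    (hf : Continuous f) (hg : Continuous g) (hcf : HasCompactSupport f) :
    Integrable (fun x => f x * g x) (volume : Measure (Fin d → ℝ)) :=
  (hf.mul hg).integrable_of_hasCompactSupport (hcf.mul_right)

lemma ibp {d : ℕ} {f g : (Fin d → ℝ) → ℝ} (i : Fin d)
    (hf : ContDiff ℝ (⊤ : ℕ∞) f) (hcf : HasCompactSupport f)
    (hg : ContDiff ℝ (⊤ : ℕ∞) g) (hcg : HasCompactSupport g) :
    ∫ x, f x * pd i g x = - ∫ x, pd i f x * g x := by
  have := integral_mul_fderiv_eq_neg_fderiv_mul_of_integrable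
    (μ := (volume : Measure (Fin d → ℝ))) (f := f) (g := g) (v := Pi.single i 1)
    (integrable_mul_cc ((contDiff_pd i hf).continuous) hg.continuous (hcs_pd i hcf))
    (integrable_mul_cc hf.continuous ((contDiff_pd i hg).continuous) hcf)
    (integrable_mul_cc hf.continuous hg.continuous hcf)
    (fun x _ => (hf.differentiable (by simp)).differentiableAt)
      (fun x _ => (hg.differentiable (by simp)).differentiableAt)
  exact this

lemma mt_pair {d : ℕ} {u : (Fin d → ℝ) → ℝ} (hu : ContDiff ℝ (⊤ : ℕ∞) u)
    (hcu : HasCompactSupport u) (i j : Fin d) :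
    ∫ x, pd j (pd i u) x * pd j (pd i u) x
      = ∫ x, pd i (pd i u) x * pd j (pd j u) x := by
  have h1 : ∫ x, pd i u x * pd j (pd j (pd i u)) x
      = - ∫ x, pd j (pd i u) x * pd j (pd i u) x :=
    ibp j (contDiff_pd i hu) (hcs_pd i hcu)
      (contDiff_pd j (contDiff_pd i hu)) (hcs_pd j (hcs_pd i hcu))
  have hswap : ∀ x, pd j (pd j (pd i u)) x = pd i (pd j (pd j u)) x := by
    intro x
    have e1 : pd j (pd i u) = pd i (pd j u) := funext fun y => clairaut hu j i y
    rw [e1]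
    exact clairaut (contDiff_pd j hu) j i x
  have h2 : ∫ x, pd j (pd j u) x * pd i (pd i u) x
      = - ∫ x, pd i (pd j (pd j u)) x * pd i u x :=
    ibp i (contDiff_pd j (contDiff_pd j hu)) (hcs_pd j (hcs_pd j hcu))
      (contDiff_pd i hu) (hcs_pd i hcu)
  calc ∫ x, pd j (pd i u) x * pd j (pd i u) x
      = - ∫ x, pd i u x * pd j (pd j (pd i u)) x := by linarith [h1]
    _ = - ∫ x, pd i (pd j (pd j u)) x * pd i u x := by
        congr 1; apply integral_congr_ae; filter_upwards with x; rw [hswap x]; ring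
    _ = ∫ x, pd j (pd j u) x * pd i (pd i u) x := by linarith [h2]
    _ = ∫ x, pd i (pd i u) x * pd j (pd j u) x := by
        apply integral_congr_ae; filter_upwards with x; ring

lemma trace_hess {d : ℕ} (u : (Fin d → ℝ) → ℝ) (x : Fin d → ℝ) :
    trace (hessianMatrix u x) = ∑ i, pd i (pd i u) x := rfl

lemma cont_pd2 {d : ℕ} {u : (Fin d → ℝ) → ℝ} (hu : ContDiff ℝ (⊤ : ℕ∞) u) (i j : Fin d) :
    Continuous (pd j (pd i u)) := (contDiff_pd j (contDiff_pd i hu)).continuous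

lemma hcs_pd2 {d : ℕ} {u : (Fin d → ℝ) → ℝ} (hcu : HasCompactSupport u) (i j : Fin d) :
    HasCompactSupport (pd j (pd i u)) := hcs_pd j (hcs_pd i hcu)

lemma miranda_talenti {d : ℕ} {u : (Fin d → ℝ) → ℝ} (hu : ContDiff ℝ (⊤ : ℕ∞) u)
    (hcu : HasCompactSupport u) :
    ∫ x, frobInner (hessianMatrix u x) (hessianMatrix u x)
      = ∫ x, (trace (hessianMatrix u x)) ^ 2 := by
  have hint : ∀ i j k l : Fin d,
      Integrable (fun x => pd j (pd i u) x * pd l (pd k u) x)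
        (volume : Measure (Fin d → ℝ)) := fun i j k l =>
    integrable_mul_cc (cont_pd2 hu i j) (cont_pd2 hu k l) (hcs_pd2 hcu i j)
  have swap : ∀ f : Fin d → Fin d → (Fin d → ℝ) → ℝ,
      (∀ i j, Integrable (f i j) (volume : Measure (Fin d → ℝ))) →
      ∑ i, ∑ j, ∫ x, f i j x = ∫ x, ∑ i, ∑ j, f i j x := by
    intro f hf
    calc ∑ i, ∑ j, ∫ x, f i j x = ∑ i, ∫ x, ∑ j, f i j x :=
          Finset.sum_congr rfl fun i _ =>
            (integral_finset_sum _ (fun j _ => hf i j)).symm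
      _ = ∫ x, ∑ i, ∑ j, f i j x :=
          (integral_finset_sum _ (fun i _ =>
            integrable_finset_sum _ (fun j _ => hf i j))).symm
  have lhs : ∫ x, frobInner (hessianMatrix u x) (hessianMatrix u x)
      = ∑ i, ∑ j, ∫ x, pd j (pd i u) x * pd j (pd i u) x := by
    rw [swap _ (fun i j => hint i j i j)]; rfl
  have rhs : ∫ x, (trace (hessianMatrix u x)) ^ 2
      = ∑ i, ∑ j, ∫ x, pd i (pd i u) x * pd j (pd j u) x := by
    rw [swap _ (fun i j => hint i i j j)]
    apply integral_congr_ae; filter_upwards with x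
    rw [trace_hess, sq, Finset.sum_mul_sum]
  rw [lhs, rhs]
  exact Finset.sum_congr rfl fun i _ => Finset.sum_congr rfl fun j _ => mt_pair hu hcu i j

lemma frobInner_nonneg {d : ℕ} (A : Matrix (Fin d) (Fin d) ℝ) : 0 ≤ frobInner A A :=
  Finset.sum_nonneg fun i _ => Finset.sum_nonneg fun j _ => mul_self_nonneg _

lemma frobNorm_sq {d : ℕ} (A : Matrix (Fin d) (Fin d) ℝ) :
    frobNorm A ^ 2 = frobInner A A := Real.sq_sqrt (frobInner_nonneg A)

lemma frobInner_pos {d : ℕ} {A : Matrix (Fin d) (Fin d) ℝ} (hA : A ≠ 0) :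
    0 < frobInner A A := by
  rcases (frobInner_nonneg A).lt_or_eq with h | h
  · exact h
  exfalso; apply hA
  ext i j
  have h1 : ∀ i ∈ Finset.univ, (0:ℝ) ≤ ∑ j, A i j * A i j :=
    fun i _ => Finset.sum_nonneg fun j _ => mul_self_nonneg _
  have h2 := (Finset.sum_eq_zero_iff_of_nonneg h1).mp h.symm i (Finset.mem_univ i)
  have h3 := (Finset.sum_eq_zero_iff_of_nonneg
    (fun j _ => mul_self_nonneg (A i j))).mp h2 j (Finset.mem_univ j)
  simpa using mul_self_eq_zero.mp h3

lemma frob_cauchy_schwarz {d : ℕ} (M H : Matrix (Fin d) (Fin d) ℝ) :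
    |frobInner M H| ≤ frobNorm M * frobNorm H := by
  have key : (frobInner M H) ^ 2 ≤ frobInner M M * frobInner H H := by
    have h := Finset.sum_mul_sq_le_sq_mul_sq (Finset.univ : Finset (Fin d × Fin d))
      (fun p => M p.1 p.2) (fun p => H p.1 p.2)
    simpa [frobInner, Fintype.sum_prod_type, sq] using h
  calc |frobInner M H| = Real.sqrt ((frobInner M H) ^ 2) := (Real.sqrt_sq_eq_abs _).symm
    _ ≤ Real.sqrt (frobInner M M * frobInner H H) := Real.sqrt_le_sqrt key
    _ = frobNorm M * frobNorm H := Real.sqrt_mul (frobInner_nonneg M) _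

lemma frobInner_expand {d : ℕ} (γ : ℝ) (A H : Matrix (Fin d) (Fin d) ℝ) :
    frobInner (γ • A - 1) H = γ * frobInner A H - trace H := by
  simp only [frobInner, Matrix.sub_apply, Matrix.smul_apply, Matrix.one_apply,
    smul_eq_mul, sub_mul, ite_mul, one_mul, zero_mul, Finset.sum_sub_distrib,
    Finset.sum_ite_eq, Finset.mem_univ, if_true, Matrix.trace, Matrix.diag,
    Finset.mul_sum, mul_assoc]

lemma frobInner_comm {d : ℕ} (A B : Matrix (Fin d) (Fin d) ℝ) :
    frobInner A B = frobInner B A := by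
  unfold frobInner
  exact Finset.sum_congr rfl fun i _ => Finset.sum_congr rfl fun j _ => mul_comm _ _

lemma cordes_pointwise {d : ℕ} {ε : ℝ} (hε1 : ε ≤ 1)
    {A : Matrix (Fin d) (Fin d) ℝ} (hA : A ≠ 0) (hc : CordesCond ε A)
    (H : Matrix (Fin d) (Fin d) ℝ) :
    |trace A / frobNorm A ^ 2 * frobInner A H - trace H|
      ≤ Real.sqrt (1 - ε) * frobNorm H := by
  set γ : ℝ := trace A / frobNorm A ^ 2 with hγ
  have hAA : 0 < frobInner A A := frobInner_pos hA
  have hfn : frobNorm A ^ 2 = frobInner A A := frobNorm_sq A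
  set M : Matrix (Fin d) (Fin d) ℝ := γ • A - 1 with hM
  have htrM : trace M = γ * trace A - d := by
    rw [hM, Matrix.trace_sub, Matrix.trace_smul, Matrix.trace_one]
    simp [smul_eq_mul]
  have hMM : frobInner M M ≤ 1 - ε := by
    have e1 : frobInner M M = γ * frobInner A M - trace M := frobInner_expand γ A M
    have e2 : frobInner A M = γ * frobInner A A - trace A := by
      rw [frobInner_comm A M]; exact frobInner_expand γ A A
    have hγval : γ = trace A / frobInner A A := by rw [hγ, hfn]
    have e3 : frobInner M M = (d : ℝ) - trace A ^ 2 / frobInner A A := by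
      rw [e1, e2, htrM, hγval]
      field_simp
      ring
    have hcordes : (d : ℝ) - 1 + ε ≤ trace A ^ 2 / frobInner A A := by
      rw [le_div_iff₀ hAA]
      calc ((d : ℝ) - 1 + ε) * frobInner A A
          = ((d : ℝ) - 1 + ε) * frobNorm A ^ 2 := by rw [hfn]
        _ ≤ trace A ^ 2 := hc
    rw [e3]; linarith
  calc |γ * frobInner A H - trace H| = |frobInner M H| := by rw [frobInner_expand γ A H]
    _ ≤ frobNorm M * frobNorm H := frob_cauchy_schwarz M H
    _ ≤ Real.sqrt (1 - ε) * frobNorm H := by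
        apply mul_le_mul_of_nonneg_right _ (Real.sqrt_nonneg _)
        exact Real.sqrt_le_sqrt hMM

lemma l2_cs {d : ℕ} {f g : (Fin d → ℝ) → ℝ}
    (hf : Continuous f) (hcf : HasCompactSupport f)
    (hg : Continuous g) (hcg : HasCompactSupport g)
    (hf0 : ∀ x, 0 ≤ f x) (hg0 : ∀ x, 0 ≤ g x) :
    ∫ x, f x * g x
      ≤ Real.sqrt (∫ x, f x ^ 2) * Real.sqrt (∫ x, g x ^ 2) := by
  have hpq : Real.HolderConjugate 2 2 := Real.HolderConjugate.two_two
  have h2 : (ENNReal.ofReal (2:ℝ)) = 2 := by norm_num [ENNReal.ofReal_ofNat]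
  have hmf : MemLp f (ENNReal.ofReal (2:ℝ)) (volume : Measure (Fin d → ℝ)) := by
    rw [h2]; exact hf.memLp_of_hasCompactSupport hcf
  have hmg : MemLp g (ENNReal.ofReal (2:ℝ)) (volume : Measure (Fin d → ℝ)) := by
    rw [h2]; exact hg.memLp_of_hasCompactSupport hcg
  have key := integral_mul_le_Lp_mul_Lq_of_nonneg hpq
    (Filter.Eventually.of_forall hf0) (Filter.Eventually.of_forall hg0) hmf hmg
  have cast : ∀ h : (Fin d → ℝ) → ℝ,
      (∫ x, h x ^ (2:ℝ)) ^ ((1:ℝ)/2) = Real.sqrt (∫ x, h x ^ 2) := by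
    intro h
    rw [Real.sqrt_eq_rpow]
    congr 1
    apply integral_congr_ae; filter_upwards with x
    rw [← Real.rpow_natCast (h x) 2]; norm_num
  rw [cast f, cast g] at key
  exact key

lemma hcs_sum {d : ℕ} {ι : Type*} (s : Finset ι) (f : ι → (Fin d → ℝ) → ℝ)
    (h : ∀ i ∈ s, HasCompactSupport (f i)) :
    HasCompactSupport (fun x => ∑ i ∈ s, f i x) := by
  classical
  induction s using Finset.induction_on with
  | empty => simpa using HasCompactSupport.intro isCompact_empty (by simp)
  | @insert a s hx ih =>
    simp only [Finset.sum_insert hx]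
    exact (h _ (Finset.mem_insert_self _ _)).add
      (ih fun i hi => h i (Finset.mem_insert_of_mem hi))

theorem cordes_boundedness_integral {d : ℕ} (hd : 1 ≤ d) {ε : ℝ}
    (hε0 : 0 < ε) (hε1 : ε ≤ 1)
    (A : (Fin d → ℝ) → Matrix (Fin d) (Fin d) ℝ)
    (hmeas : ∀ i j, Measurable fun x => A x i j)
    (hae : ∀ᵐ x : Fin d → ℝ, A x ≠ 0 ∧ CordesCond ε (A x))
    (u v : (Fin d → ℝ) → ℝ)
    (hu : ContDiff ℝ (⊤ : ℕ∞) u) (hcu : HasCompactSupport u)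
    (hv : ContDiff ℝ (⊤ : ℕ∞) v) (hcv : HasCompactSupport v) :
    |∫ x : Fin d → ℝ,
        (trace (A x) / frobNorm (A x) ^ 2) * frobInner (A x) (hessianMatrix u x)
          * trace (hessianMatrix v x)|
      ≤ (1 + Real.sqrt (1 - ε))
          * Real.sqrt (∫ x : Fin d → ℝ, (trace (hessianMatrix u x)) ^ 2)
          * Real.sqrt (∫ x : Fin d → ℝ, (trace (hessianMatrix v x)) ^ 2) := by
  set c : ℝ := Real.sqrt (1 - ε) with hc
  have hc0 : 0 ≤ c := Real.sqrt_nonneg _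
  -- the Laplacians
  set Du : (Fin d → ℝ) → ℝ := fun x => trace (hessianMatrix u x) with hDu
  set Dv : (Fin d → ℝ) → ℝ := fun x => trace (hessianMatrix v x) with hDv
  have cDu : Continuous Du := by
    show Continuous fun x => ∑ i, pd i (pd i u) x
    exact continuous_finset_sum _ fun i _ => cont_pd2 hu i i
  have cDv : Continuous Dv := by
    show Continuous fun x => ∑ i, pd i (pd i v) x
    exact continuous_finset_sum _ fun i _ => cont_pd2 hv i i
  have hcsDu : HasCompactSupport Du := hcs_sum _ _ fun i _ => hcs_pd2 hcu i i
  have hcsDv : HasCompactSupport Dv := hcs_sum _ _ fun i _ => hcs_pd2 hcv i i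
  -- the Frobenius norm of the Hessian of u
  set fI : (Fin d → ℝ) → ℝ :=
    fun x => frobInner (hessianMatrix u x) (hessianMatrix u x) with hfI
  have cfI : Continuous fI := by
    show Continuous fun x => ∑ i, ∑ j, pd j (pd i u) x * pd j (pd i u) x
    exact continuous_finset_sum _ fun i _ => continuous_finset_sum _
      fun j _ => (cont_pd2 hu i j).mul (cont_pd2 hu i j)
  have hcsfI : HasCompactSupport fI :=
    hcs_sum _ _ fun i _ => hcs_sum _ _ fun j _ => (hcs_pd2 hcu i j).mul_right
  set fn : (Fin d → ℝ) → ℝ := fun x => frobNorm (hessianMatrix u x) with hfn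
  have cfn : Continuous fn := Real.continuous_sqrt.comp cfI
  have hcsfn : HasCompactSupport fn := hcsfI.comp_left (g := Real.sqrt) Real.sqrt_zero
  have fn0 : ∀ x, 0 ≤ fn x := fun x => Real.sqrt_nonneg _
  have fnsq : ∀ x, fn x ^ 2 = fI x := fun x => frobNorm_sq _
  -- the dominating function
  set g : (Fin d → ℝ) → ℝ := fun x => (|Du x| + c * fn x) * |Dv x| with hg
  have cg1 : Continuous fun x => |Du x| + c * fn x :=
    cDu.abs.add (continuous_const.mul cfn)
  have hcsg1 : HasCompactSupport fun x => |Du x| + c * fn x :=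
    hcsDu.abs.add (hcsfn.comp_left (g := (c * ·)) (by simp))
  have hgi : Integrable g (volume : Measure (Fin d → ℝ)) :=
    integrable_mul_cc cg1 cDv.abs hcsg1
  -- step 1 : pointwise a.e. bound
  have step1 : |∫ x : Fin d → ℝ,
        (trace (A x) / frobNorm (A x) ^ 2) * frobInner (A x) (hessianMatrix u x)
          * trace (hessianMatrix v x)| ≤ ∫ x, g x := by
    have habs : |∫ x : Fin d → ℝ,
          (trace (A x) / frobNorm (A x) ^ 2) * frobInner (A x) (hessianMatrix u x)
            * trace (hessianMatrix v x)|
        ≤ ∫ x : Fin d → ℝ, |(trace (A x) / frobNorm (A x) ^ 2)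
            * frobInner (A x) (hessianMatrix u x) * trace (hessianMatrix v x)| := by
      simpa [Real.norm_eq_abs, -abs_mul] using norm_integral_le_integral_norm
        (μ := (volume : Measure (Fin d → ℝ)))
        (fun x => (trace (A x) / frobNorm (A x) ^ 2)
          * frobInner (A x) (hessianMatrix u x) * trace (hessianMatrix v x))
    refine le_trans habs ?_
    apply integral_mono_of_nonneg (Filter.Eventually.of_forall fun x => abs_nonneg _) hgi
    filter_upwards [hae] with x hx
    obtain ⟨hA, hcor⟩ := hx
    have h1 := cordes_pointwise hε1 hA hcor (hessianMatrix u x)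
    set a : ℝ := trace (A x) / frobNorm (A x) ^ 2 * frobInner (A x) (hessianMatrix u x)
      with ha
    have h2 : |a| ≤ |Du x| + c * fn x := by
      calc |a| = |Du x + (a - Du x)| := by ring_nf
        _ ≤ |Du x| + |a - Du x| := abs_add_le _ _
        _ ≤ |Du x| + c * fn x := by
            have : |a - Du x| ≤ c * fn x := h1
            linarith
    calc |a * trace (hessianMatrix v x)| = |a| * |Dv x| := abs_mul _ _
      _ ≤ (|Du x| + c * fn x) * |Dv x| :=
          mul_le_mul_of_nonneg_right h2 (abs_nonneg _)
  -- step 2 : split the integral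
  have i1 : Integrable (fun x => |Du x| * |Dv x|) (volume : Measure (Fin d → ℝ)) :=
    integrable_mul_cc cDu.abs cDv.abs hcsDu.abs
  have i2 : Integrable (fun x => fn x * |Dv x|) (volume : Measure (Fin d → ℝ)) :=
    integrable_mul_cc cfn cDv.abs hcsfn
  have step2 : ∫ x, g x
      = (∫ x, |Du x| * |Dv x|) + c * ∫ x, fn x * |Dv x| := by
    have : ∫ x, g x = ∫ x, (|Du x| * |Dv x| + c * (fn x * |Dv x|)) := by
      apply integral_congr_ae; filter_upwards with x; simp only [hg]; ring
    rw [this, integral_add i1 (i2.const_mul c), MeasureTheory.integral_const_mul]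
  -- step 3 : Cauchy-Schwarz
  have habs2 : ∀ w : (Fin d → ℝ) → ℝ, (∫ x, |w x| ^ 2) = ∫ x, w x ^ 2 := by
    intro w
    apply integral_congr_ae; filter_upwards with x; exact sq_abs _
  have cs1 : ∫ x, |Du x| * |Dv x|
      ≤ Real.sqrt (∫ x, Du x ^ 2) * Real.sqrt (∫ x, Dv x ^ 2) := by
    have := l2_cs cDu.abs hcsDu.abs cDv.abs hcsDv.abs
      (fun x => abs_nonneg _) (fun x => abs_nonneg _)
    rwa [habs2 Du, habs2 Dv] at this
  have hMT : (∫ x, fn x ^ 2) = ∫ x, Du x ^ 2 := by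
    have : (∫ x, fn x ^ 2) = ∫ x, fI x := by
      apply integral_congr_ae; filter_upwards with x; exact fnsq x
    rw [this]
    exact miranda_talenti hu hcu
  have cs2 : ∫ x, fn x * |Dv x|
      ≤ Real.sqrt (∫ x, Du x ^ 2) * Real.sqrt (∫ x, Dv x ^ 2) := by
    have := l2_cs cfn hcsfn cDv.abs hcsDv.abs fn0 (fun x => abs_nonneg _)
    rwa [habs2 Dv, hMT] at this
  have sqnn : 0 ≤ Real.sqrt (∫ x, Du x ^ 2) * Real.sqrt (∫ x, Dv x ^ 2) :=
    mul_nonneg (Real.sqrt_nonneg _) (Real.sqrt_nonneg _)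
  calc |∫ x : Fin d → ℝ,
        (trace (A x) / frobNorm (A x) ^ 2) * frobInner (A x) (hessianMatrix u x)
          * trace (hessianMatrix v x)| ≤ ∫ x, g x := step1
    _ = (∫ x, |Du x| * |Dv x|) + c * ∫ x, fn x * |Dv x| := step2
    _ ≤ Real.sqrt (∫ x, Du x ^ 2) * Real.sqrt (∫ x, Dv x ^ 2)
        + c * (Real.sqrt (∫ x, Du x ^ 2) * Real.sqrt (∫ x, Dv x ^ 2)) := by
        have := mul_le_mul_of_nonneg_left cs2 hc0
        linarith
    _ = (1 + c) * Real.sqrt (∫ x, Du x ^ 2) * Real.sqrt (∫ x, Dv x ^ 2) := by ring
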